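/- arXiv:1807.05822 — 6 statements merged into one kernel-verified Lean document; each statement's English description precedes it below -/
import Mathlib

section
/- Let (G,P) be a quasi-lattice ordered group. The family of indicator functions (χ_{pP})_{p∈P}, where χ_{pP} : P → ℝ takes the value 1 on pP and 0 elsewhere, is linearly independent; equivalently, if F ⊆ P is finite and ∑_{p∈F} c_p χ_{pP}(x) = 0 for all x ∈ P, then c_p = 0 for every p ∈ F. -/
/-! Since `P ∩ P⁻¹ = {e}`, the relation `p ≤ x ↔ x ∈ pP` is a partial order. Evaluating the
vanishing sum at a minimal element `p₀` of `F` sees only the term `c_{p₀}`, so `c_{p₀} = 0`; removing `p₀`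
from `F` and inducting gives the rest. -/

/-- The order on `G` induced by the submonoid `P`: `g ≤ h` iff `g⁻¹ * h ∈ P`. -/
def QLe {G : Type*} [Group G] (P : Submonoid G) (g h : G) : Prop := g⁻¹ * h ∈ P

/-- `u` is the least upper bound of `g` and `h` with respect to `QLe P`. -/
def QLub {G : Type*} [Group G] (P : Submonoid G) (g h u : G) : Prop :=
  QLe P g u ∧ QLe P h u ∧ ∀ v, QLe P g v → QLe P h v → QLe P u v

/-- `(G, P)` is a quasi-lattice ordered group. -/
structure QuasiLatticeOrdered {G : Type*} [Group G] (P : Submonoid G) : Prop where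
  gen : Subgroup.closure (P : Set G) = ⊤
  cap : ∀ g ∈ P, g⁻¹ ∈ P → g = 1
  lub : ∀ g h : G, (∃ u, QLe P g u ∧ QLe P h u) → ∃ u, QLub P g h u

theorem Finset.eq_zero_of_sum_filter_le_eq_zero {α M : Type*} [PartialOrder α] [DecidableLE α]
    [AddCommMonoid M] {S : Set α} (F : Finset α) (hF : ↑F ⊆ S) (c : α → M)
    (hsum : ∀ x ∈ S, ∑ p ∈ F with p ≤ x, c p = 0) : ∀ p ∈ F, c p = 0 := by
  classical
  induction F using Finset.strongInduction with
  | _ F ih =>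
    intro p hp
    obtain ⟨p₀, hp₀, hmin⟩ := Finset.exists_minimal ⟨p, hp⟩
    have hbelow : {q ∈ F | q ≤ p₀} = {p₀} := by
      ext q
      simp only [Finset.mem_filter, Finset.mem_singleton]
      exact ⟨fun ⟨hq, hle⟩ => le_antisymm hle (hmin hq hle), by rintro rfl; exact ⟨hp₀, le_rfl⟩⟩
    have hc₀ : c p₀ = 0 := by
      simpa [hbelow] using hsum p₀ (hF hp₀)
    rcases eq_or_ne p p₀ with rfl | hne
    · exact hc₀
    · refine ih (F.erase p₀) (Finset.erase_ssubset hp₀)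
        ((Finset.coe_subset.2 (F.erase_subset p₀)).trans hF) (fun x hx => ?_) p
        (Finset.mem_erase.2 ⟨hne, hp⟩)
      rw [Finset.filter_erase, Finset.sum_erase _ hc₀, hsum x hx]

abbrev QuasiLatticeOrdered.toPartialOrder {G : Type*} [Group G] {P : Submonoid G}
    (hQL : QuasiLatticeOrdered P) : PartialOrder G where
  le := QLe P
  le_refl g := by simp [QLe]
  le_trans g h k hgh hhk := by simpa [QLe, mul_assoc] using P.mul_mem hgh hhk
  le_antisymm g h hgh hhg := by
    have hinv : (g⁻¹ * h)⁻¹ ∈ P := by simpa [QLe] using hhg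
    simpa [inv_mul_eq_one] using hQL.cap _ hgh hinv

/-- The indicator functions `χ_{pP} : P → ℝ`, `p ∈ P`, are linearly independent: if `F ⊆ P`
is finite and `∑_{p ∈ F} c_p χ_{pP}(x) = 0` for all `x ∈ P`, then `c_p = 0` for all `p ∈ F`.
Here, for `p, x ∈ P`, `x ∈ pP` iff `p⁻¹ x ∈ P` iff `QLe P p x`. -/
theorem stmt1 {G : Type*} [Group G] (P : Submonoid G) (hQL : QuasiLatticeOrdered P)
    (F : Finset G) (hF : ↑F ⊆ (P : Set G)) (c : G → ℝ)
    (hsum : ∀ x ∈ P,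
      ∑ p ∈ F, c p * Set.indicator {y | QLe P p y} (fun _ => (1 : ℝ)) x = 0) :
    ∀ p ∈ F, c p = 0 := by
  classical
  let := hQL.toPartialOrder
  refine F.eq_zero_of_sum_filter_le_eq_zero hF c fun x hx => ?_
  rw [Finset.sum_filter]
  refine (Finset.sum_congr rfl fun p _ => ?_).trans (hsum x hx)
  simp only [Set.indicator_apply, Set.mem_ofPred_eq, mul_ite, mul_one, mul_zero]
  rfl
end

section
/- Let (G,P) be a quasi-lattice ordered group. Every set Ω ∈ B_P can be written as a finite disjoint union of sets, each of which is either of the form pP for some p ∈ P, or of the form pΩ_J for some p ∈ P and some finite nonempty subset J ⊆ P∖{e}. -/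
/-- Membership in the algebra `B_P` of subsets of `P` generated by the sets
`pP = {x | p⁻¹ x ∈ P}`, `p ∈ P`: the smallest collection of subsets containing the sets
`pP` and closed under complements in `P`, finite unions and finite intersections. -/
inductive MemBP {G : Type*} [Group G] (P : Submonoid G) : Set G → Prop
  | basic (p : G) (hp : p ∈ P) : MemBP P {x | QLe P p x}
  | compl (Ω : Set G) : MemBP P Ω → MemBP P ((P : Set G) \ Ω)
  | union (Ω₁ Ω₂ : Set G) : MemBP P Ω₁ → MemBP P Ω₂ → MemBP P (Ω₁ ∪ Ω₂)
  | inter (Ω₁ Ω₂ : Set G) : MemBP P Ω₁ → MemBP P Ω₂ → MemBP P (Ω₁ ∩ Ω₂)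

/-- For a finite set `J ⊆ P \ {e}`, `Ω_J = ⋂_{q ∈ J} (P \ qP)`
(with the convention `Ω_∅ = P`). -/
def OmegaJ {G : Type*} [Group G] (P : Submonoid G) (J : Finset G) : Set G :=
  (P : Set G) ∩ ⋂ q ∈ J, {x | QLe P q x}ᶜ

/-!
Fix a finite set `S` such that membership in `Ω` only depends on which `p ∈ S` lie below a
point; such an `S` exists for every `Ω ∈ B_P`. Then `Ω` is the disjoint union of the nonempty
atoms `{x ∈ P | p ≤ x ↔ p ∈ A for all p ∈ S}`, `A ⊆ S`, that meet it. In a nonempty atom the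
elements of `A` have a join `r`, and for `y ≥ r` one has `q ≤ y` iff `q ∨ r ≤ y`. Hence the atom
is `{y ≥ r | y ≱ q ∨ r for q ∈ S \ A}`, which is `r Ω_J` for `J = {r⁻¹ (q ∨ r)}`, or `rP` when
`J` is empty. No `q ∨ r` equals `r`, since otherwise `q ≤ r` would put `q` into `A`.
-/

section QuasiLatticeOrder

variable {G : Type*} [Group G] {P : Submonoid G}

theorem QLe.trans {a b c : G} (hab : QLe P a b) (hbc : QLe P b c) : QLe P a c := by
  simpa [QLe, mul_assoc] using mul_mem hab hbc

theorem QLe.mem {p x : G} (hp : p ∈ P) (h : QLe P p x) : x ∈ P := by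
  simpa using mul_mem hp h

theorem qle_one_left_iff {x : G} : QLe P 1 x ↔ x ∈ P := by
  simp [QLe]

theorem qle_mul_left_iff (r a b : G) : QLe P (r * a) (r * b) ↔ QLe P a b := by
  simp [QLe, mul_assoc]

theorem QuasiLatticeOrdered.exists_join_finset (hQL : QuasiLatticeOrdered P) {A : Finset G}
    {x : G} (hxP : x ∈ P) (hxA : ∀ p ∈ A, QLe P p x) :
    ∃ r ∈ P, ∀ y ∈ P, (QLe P r y ↔ ∀ p ∈ A, QLe P p y) := by
  classical
  induction A using Finset.induction_on with
  | empty => exact ⟨1, one_mem P, fun y hy => by simpa [qle_one_left_iff] using hy⟩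
  | @insert a A _ ih =>
    obtain ⟨r, hrP, hr⟩ := ih fun p hp => hxA p (Finset.mem_insert_of_mem hp)
    have hrx : QLe P r x := (hr x hxP).mpr fun p hp => hxA p (Finset.mem_insert_of_mem hp)
    obtain ⟨u, hru, hau, hu⟩ := hQL.lub r a ⟨x, hrx, hxA a (Finset.mem_insert_self a A)⟩
    refine ⟨u, hru.mem hrP, fun y hy => ⟨fun huy => ?_, fun h => ?_⟩⟩
    · simpa [Finset.forall_mem_insert, hau.trans huy] using (hr y hy).mp (hru.trans huy)
    · rw [Finset.forall_mem_insert] at h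
      exact hu y ((hr y hy).mpr h.2) h.1

theorem QuasiLatticeOrdered.exists_finset_joins (hQL : QuasiLatticeOrdered P) (Q : Finset G)
    (r : G) :
    ∃ T : Finset G, (∀ s ∈ T, QLe P r s ∧ ∃ q ∈ Q, QLe P q s) ∧
      ∀ y, QLe P r y → ((∃ q ∈ Q, QLe P q y) ↔ ∃ s ∈ T, QLe P s y) := by
  classical
  induction Q using Finset.induction_on with
  | empty => exact ⟨∅, by simp, by simp⟩
  | @insert q Q _ ih =>
    obtain ⟨T, hT, hTy⟩ := ih
    by_cases hqr : ∃ u, QLe P q u ∧ QLe P r u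
    · obtain ⟨s, hqs, hrs, hs⟩ := hQL.lub q r hqr
      refine ⟨insert s T, ?_, fun y hry => ?_⟩
      · simp only [Finset.forall_mem_insert, Finset.exists_mem_insert]
        exact ⟨⟨hrs, Or.inl hqs⟩, fun t ht => ⟨(hT t ht).1, Or.inr (hT t ht).2⟩⟩
      · rw [Finset.exists_mem_insert, Finset.exists_mem_insert, hTy y hry]
        exact or_congr_left ⟨fun hqy => hs y hqy hry, fun hsy => hqs.trans hsy⟩
    · refine ⟨T, fun t ht => ⟨(hT t ht).1, ?_⟩, fun y hry => ?_⟩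
      · simpa [Finset.exists_mem_insert] using Or.inr (hT t ht).2
      · rw [Finset.exists_mem_insert, ← hTy y hry]
        exact or_iff_right fun hqy => hqr ⟨y, hqy, hry⟩

end QuasiLatticeOrder

section Atoms

variable {G : Type*} [Group G] (P : Submonoid G)

def Atom (S A : Finset G) : Set G :=
  {x | x ∈ P ∧ ∀ p ∈ S, (QLe P p x ↔ p ∈ A)}

def IsBasicPiece (X : Set G) : Prop :=
  (∃ p ∈ P, X = {x | QLe P p x}) ∨
    ∃ p ∈ P, ∃ J : Finset G, J.Nonempty ∧ ↑J ⊆ (P : Set G) \ {1} ∧ X = (p * ·) '' OmegaJ P J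

variable {P}

theorem mem_atom_iff [DecidableEq G] {S A : Finset G} (hA : A ⊆ S) {y : G} :
    y ∈ Atom P S A ↔ y ∈ P ∧ (∀ p ∈ A, QLe P p y) ∧ ∀ q ∈ S \ A, ¬QLe P q y := by
  refine and_congr_right fun _ => ⟨fun h => ⟨fun p hp => (h p (hA hp)).mpr hp, ?_⟩, ?_⟩
  · intro q hq hqy
    exact (Finset.mem_sdiff.mp hq).2 ((h q (Finset.mem_sdiff.mp hq).1).mp hqy)
  · rintro ⟨hAy, hSAy⟩ p hp
    by_cases hpA : p ∈ A
    · exact iff_of_true (hAy p hpA) hpA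
    · exact iff_of_false (hSAy p (Finset.mem_sdiff.mpr ⟨hp, hpA⟩)) hpA

theorem atom_disjoint {S A B : Finset G} (hA : A ⊆ S) (hB : B ⊆ S) (hAB : A ≠ B) :
    Disjoint (Atom P S A) (Atom P S B) := by
  refine Set.disjoint_left.mpr fun x hxA hxB => hAB (Finset.ext fun p => ?_)
  constructor
  · exact fun hp => (hxB.2 p (hA hp)).mp ((hxA.2 p (hA hp)).mpr hp)
  · exact fun hp => (hxA.2 p (hB hp)).mp ((hxB.2 p (hB hp)).mpr hp)

theorem setOf_qle_not_qle_eq_image_omegaJ [DecidableEq G] (r : G) (T : Finset G) :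
    {y | QLe P r y ∧ ∀ s ∈ T, ¬QLe P s y} = (r * ·) '' OmegaJ P (T.image (r⁻¹ * ·)) := by
  ext y
  constructor
  · rintro ⟨hry, hT⟩
    refine ⟨r⁻¹ * y, ⟨hry, ?_⟩, mul_inv_cancel_left r y⟩
    simp only [Set.mem_iInter, Finset.mem_image, Set.mem_compl_iff, Set.mem_ofPred_eq]
    rintro _ ⟨s, hs, rfl⟩ hsy
    rw [← qle_mul_left_iff r, mul_inv_cancel_left, mul_inv_cancel_left] at hsy
    exact hT s hs hsy
  · rintro ⟨z, ⟨hz, hzT⟩, rfl⟩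
    simp only [Set.mem_iInter, Finset.mem_image, Set.mem_compl_iff, Set.mem_ofPred_eq] at hzT
    refine ⟨by simpa [QLe] using hz, fun s hs hsz => hzT _ ⟨s, hs, rfl⟩ ?_⟩
    rwa [← qle_mul_left_iff r, mul_inv_cancel_left]

theorem image_mul_omegaJ_empty (r : G) :
    (r * ·) '' OmegaJ P ∅ = {y | QLe P r y} := by
  ext y
  simp [OmegaJ, QLe]

theorem isBasicPiece_atom (hQL : QuasiLatticeOrdered P) {S A : Finset G} (hA : A ⊆ S)
    (hne : (Atom P S A).Nonempty) : IsBasicPiece P (Atom P S A) := by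
  classical
  obtain ⟨x, hx⟩ := hne
  obtain ⟨hxP, hxA, hxS⟩ := (mem_atom_iff hA).mp hx
  obtain ⟨r, hrP, hr⟩ := hQL.exists_join_finset hxP hxA
  obtain ⟨T, hT, hTy⟩ := hQL.exists_finset_joins (S \ A) r
  have hatom : Atom P S A = {y | QLe P r y ∧ ∀ s ∈ T, ¬QLe P s y} := by
    ext y
    rw [mem_atom_iff hA]
    refine ⟨fun ⟨hyP, hAy, hSy⟩ => ?_, fun ⟨hry, hTy'⟩ => ?_⟩
    · have hry := (hr y hyP).mpr hAy
      refine ⟨hry, fun s hs hsy => ?_⟩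
      obtain ⟨q, hq, hqy⟩ := (hTy y hry).mpr ⟨s, hs, hsy⟩
      exact hSy q hq hqy
    · have hyP := hry.mem hrP
      refine ⟨hyP, (hr y hyP).mp hry, fun q hq hqy => ?_⟩
      obtain ⟨s, hs, hsy⟩ := (hTy y hry).mp ⟨q, hq, hqy⟩
      exact hTy' s hs hsy
  rw [hatom, setOf_qle_not_qle_eq_image_omegaJ]
  rcases T.eq_empty_or_nonempty with rfl | hTne
  · exact Or.inl ⟨r, hrP, by rw [Finset.image_empty, image_mul_omegaJ_empty]⟩
  refine Or.inr ⟨r, hrP, _, hTne.image _, ?_, rfl⟩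
  simp only [Finset.coe_image, Set.image_subset_iff]
  intro s hs
  obtain ⟨hrs, q, hq, hqs⟩ := hT s hs
  refine ⟨hrs, fun hs1 => ?_⟩
  obtain rfl : r = s := inv_mul_eq_one.mp hs1
  exact hxS q hq (hqs.trans ((hr x hxP).mpr hxA))

end Atoms

theorem MemBP.exists_finset_saturated {G : Type*} [Group G] {P : Submonoid G} {Ω : Set G}
    (h : MemBP P Ω) :
    ∃ S : Finset G, Ω ⊆ (P : Set G) ∧
      ∀ x ∈ P, ∀ y ∈ P, (∀ p ∈ S, (QLe P p x ↔ QLe P p y)) → x ∈ Ω → y ∈ Ω := by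
  classical
  induction h with
  | basic p hp =>
    refine ⟨{p}, fun x hx => hx.mem hp, fun x _ y _ hxy hx => ?_⟩
    exact (hxy p (Finset.mem_singleton_self p)).mp hx
  | compl Ω _ ih =>
    obtain ⟨S, -, hS⟩ := ih
    refine ⟨S, Set.sdiff_subset, fun x hx y hy hxy hxΩ => ⟨hy, fun hyΩ => hxΩ.2 ?_⟩⟩
    exact hS y hy x hx (fun p hp => (hxy p hp).symm) hyΩ
  | union Ω₁ Ω₂ _ _ ih₁ ih₂ =>
    obtain ⟨S₁, hΩ₁, hS₁⟩ := ih₁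
    obtain ⟨S₂, hΩ₂, hS₂⟩ := ih₂
    refine ⟨S₁ ∪ S₂, Set.union_subset hΩ₁ hΩ₂, fun x hx y hy hxy => ?_⟩
    simp only [Finset.forall_mem_union] at hxy
    exact Or.imp (hS₁ x hx y hy hxy.1) (hS₂ x hx y hy hxy.2)
  | inter Ω₁ Ω₂ _ _ ih₁ ih₂ =>
    obtain ⟨S₁, hΩ₁, hS₁⟩ := ih₁
    obtain ⟨S₂, -, hS₂⟩ := ih₂
    refine ⟨S₁ ∪ S₂, Set.inter_subset_left.trans hΩ₁, fun x hx y hy hxy => ?_⟩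
    simp only [Finset.forall_mem_union] at hxy
    exact And.imp (hS₁ x hx y hy hxy.1) (hS₂ x hx y hy hxy.2)

open Classical in
theorem eq_biUnion_atoms_of_saturated {G : Type*} [Group G] {P : Submonoid G}
    {Ω : Set G} {S : Finset G} (hΩP : Ω ⊆ (P : Set G))
    (hS : ∀ x ∈ P, ∀ y ∈ P, (∀ p ∈ S, (QLe P p x ↔ QLe P p y)) → x ∈ Ω → y ∈ Ω) :
    Ω = ⋃ A ∈ {A ∈ S.powerset | (Atom P S A ∩ Ω).Nonempty}, Atom P S A := by
  ext y
  simp only [Set.mem_iUnion, Finset.mem_filter, Finset.mem_powerset, exists_prop]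
  constructor
  · intro hy
    have hyatom : y ∈ Atom P S {p ∈ S | QLe P p y} :=
      ⟨hΩP hy, fun p hp => by simp [hp]⟩
    exact ⟨_, ⟨Finset.filter_subset _ _, y, hyatom, hy⟩, hyatom⟩
  · rintro ⟨A, ⟨-, x, ⟨hxP, hxA⟩, hx⟩, hyP, hyA⟩
    exact hS x hxP y hyP (fun p hp => (hxA p hp).trans (hyA p hp).symm) hx

theorem Finset.exists_fin_family_of_pairwiseDisjoint {ι α : Type*} (s : Finset ι)
    (f : ι → Set α) (hs : (s : Set ι).PairwiseDisjoint f) :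
    ∃ (n : ℕ) (T : Fin n → Set α), (∀ i, ∃ j ∈ s, T i = f j) ∧
      (∀ i j, i ≠ j → Disjoint (T i) (T j)) ∧ ⋃ i, T i = ⋃ j ∈ s, f j := by
  refine ⟨s.card, fun i => f (s.equivFin.symm i), fun i => ⟨_, (s.equivFin.symm i).2, rfl⟩,
    fun i j hij => hs (s.equivFin.symm i).2 (s.equivFin.symm j).2 ?_, ?_⟩
  · simpa [Subtype.ext_iff] using hij
  · ext x
    simp only [Set.mem_iUnion, exists_prop]
    exact ⟨fun ⟨i, hi⟩ => ⟨_, (s.equivFin.symm i).2, hi⟩,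
      fun ⟨j, hj, hx⟩ => ⟨s.equivFin ⟨j, hj⟩, by simpa using hx⟩⟩

/-- Every `Ω ∈ B_P` is a finite disjoint union of sets of the form `pP` (`p ∈ P`) or
`p·Ω_J` (`p ∈ P`, `J ⊆ P \ {e}` finite nonempty). -/
theorem stmt3 {G : Type*} [Group G] (P : Submonoid G) (hQL : QuasiLatticeOrdered P)
    (Ω : Set G) (hΩ : MemBP P Ω) :
    ∃ (n : ℕ) (T : Fin n → Set G),
      (∀ i, (∃ p ∈ P, T i = {x | QLe P p x}) ∨
        (∃ p ∈ P, ∃ J : Finset G, J.Nonempty ∧ ↑J ⊆ (P : Set G) \ {1} ∧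
          T i = (p * ·) '' OmegaJ P J)) ∧
      (∀ i j, i ≠ j → Disjoint (T i) (T j)) ∧
      Ω = ⋃ i, T i := by
  classical
  obtain ⟨S, hΩP, hS⟩ := hΩ.exists_finset_saturated
  set 𝒜 := {A ∈ S.powerset | (Atom P S A ∩ Ω).Nonempty}
  have h𝒜 : ∀ A ∈ 𝒜, A ⊆ S ∧ (Atom P S A ∩ Ω).Nonempty := fun A hA => by
    simpa [𝒜] using hA
  obtain ⟨n, T, hT, hdisj, hunion⟩ := 𝒜.exists_fin_family_of_pairwiseDisjoint (Atom P S)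
    fun A hA B hB hAB => atom_disjoint (h𝒜 A hA).1 (h𝒜 B hB).1 hAB
  refine ⟨n, T, fun i => ?_, hdisj, hunion ▸ eq_biUnion_atoms_of_saturated hΩP hS⟩
  obtain ⟨A, hA, hTA⟩ := hT i
  rw [hTA]
  exact isBasicPiece_atom hQL (h𝒜 A hA).1 ((h𝒜 A hA).2.mono Set.inter_subset_left)
end

section
/- Let (G,P) be a quasi-lattice ordered group and let μ be a finitely additive probability measure on (P,B_P) such that the family (μ(pP))_{p∈P} is summable. For p ∈ P set w_p = inf{μ(Ω) : Ω ∈ B_P, p ∈ Ω}. Then for every Ω ∈ B_P, the family (w_p)_{p∈Ω} is summable and ∑_{p∈Ω} w_p ≤ μ(Ω). -/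
/-- `w_p = inf { μ(Ω) : Ω ∈ B_P, p ∈ Ω }`. -/
noncomputable def wt {G : Type*} [Group G] (P : Submonoid G) (μ : Set G → ℝ) (p : G) : ℝ :=
  sInf {r : ℝ | ∃ Ω : Set G, MemBP P Ω ∧ p ∈ Ω ∧ μ Ω = r}

/-!
Finitely many points of `Ω ∈ B_P`, forming a finite set `F`, can be separated by pairwise
disjoint sets of `B_P`: take `S_p = pP \ ⋃ {qP : q ∈ F, q ≰ p}`. If `x ∈ S_p ∩ S_q` then
`p, q ≤ x`, which forces `q ≤ p` and `p ≤ q`, so `p = q` because `P ∩ P⁻¹ = {e}`. Since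
`p ∈ S_p ∩ Ω`, this gives `∑_{p ∈ F} wₚ ≤ ∑_{p ∈ F} μ(S_p ∩ Ω) ≤ μ(Ω)`, and bounded finite
partial sums of nonnegative terms give summability and the bound.
-/

section Order
variable {G : Type*} [Group G] {P : Submonoid G}

lemma qle_refl (p : G) : QLe P p p := by
  simp [QLe]

lemma qle_antisymm (hcap : ∀ g ∈ P, g⁻¹ ∈ P → g = 1) {a b : G} (hab : QLe P a b)
    (hba : QLe P b a) : a = b :=
  inv_mul_eq_one.mp (hcap _ hab (by simpa [QLe] using hba))

end Order

section Algebra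
variable {G : Type*} [Group G] {P : Submonoid G}

lemma memBP_subset {Ω : Set G} (h : MemBP P Ω) : Ω ⊆ (P : Set G) := by
  induction h with
  | basic p hp => exact fun x hx => by simpa using mul_mem hp hx
  | compl _ _ _ => exact Set.sdiff_subset
  | union _ _ _ _ ih₁ ih₂ => exact Set.union_subset ih₁ ih₂
  | inter _ _ _ _ ih₁ _ => exact Set.inter_subset_left.trans ih₁

lemma memBP_self : MemBP P (P : Set G) := by
  simpa [QLe] using MemBP.basic (P := P) 1 (one_mem P)

lemma memBP_empty : MemBP P (∅ : Set G) := by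
  simpa using MemBP.compl _ (memBP_self (P := P))

lemma memBP_diff {A B : Set G} (hA : MemBP P A) (hB : MemBP P B) : MemBP P (A \ B) := by
  have : A \ B = A ∩ ((P : Set G) \ B) := by
    ext x
    exact ⟨fun hx => ⟨hx.1, memBP_subset hA hx.1, hx.2⟩, fun hx => ⟨hx.1, hx.2.2⟩⟩
  exact this ▸ MemBP.inter _ _ hA (MemBP.compl _ hB)

lemma memBP_biUnion {ι : Type*} (s : Finset ι) {A : ι → Set G}
    (hA : ∀ i ∈ s, MemBP P (A i)) : MemBP P (⋃ i ∈ s, A i) := by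
  classical
  induction s using Finset.induction_on with
  | empty => simpa using memBP_empty
  | insert a s _ ih =>
    rw [Finset.set_biUnion_insert]
    exact MemBP.union _ _ (hA a (s.mem_insert_self a))
      (ih fun i hi => hA i (Finset.mem_insert_of_mem hi))

open Classical in
noncomputable def separatingSet (P : Submonoid G) (F : Finset G) (p : G) : Set G :=
  {x | QLe P p x} \ ⋃ q ∈ F.filter (fun q => ¬ QLe P q p), {x | QLe P q x}

lemma memBP_separatingSet (F : Finset G) {p : G} (hp : p ∈ P) (hF : ∀ q ∈ F, q ∈ P) :
    MemBP P (separatingSet P F p) := by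
  classical
  exact memBP_diff (MemBP.basic p hp)
    (memBP_biUnion _ fun q hq => MemBP.basic q (hF q (Finset.mem_of_mem_filter q hq)))

lemma mem_separatingSet_self (F : Finset G) (p : G) : p ∈ separatingSet P F p := by
  simp [separatingSet, qle_refl]

lemma pairwiseDisjoint_separatingSet (hcap : ∀ g ∈ P, g⁻¹ ∈ P → g = 1) (F : Finset G) :
    (F : Set G).PairwiseDisjoint (separatingSet P F) := by
  classical
  intro p hp q hq hpq
  refine Set.disjoint_left.mpr fun x ⟨hpx, hxp⟩ ⟨hqx, hxq⟩ => hpq (qle_antisymm hcap ?_ ?_)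
  · by_contra h
    exact hxq (Set.mem_biUnion (Finset.mem_filter.mpr ⟨hp, h⟩) hpx)
  · by_contra h
    exact hxp (Set.mem_biUnion (Finset.mem_filter.mpr ⟨hq, h⟩) hqx)

end Algebra

section Content
variable {G : Type*} [Group G] {P : Submonoid G} {μ : Set G → ℝ}

structure IsAddContentBP (P : Submonoid G) (μ : Set G → ℝ) : Prop where
  nonneg : ∀ Ω, MemBP P Ω → 0 ≤ μ Ω
  union_eq : ∀ Ω₁ Ω₂, MemBP P Ω₁ → MemBP P Ω₂ → Disjoint Ω₁ Ω₂ → μ (Ω₁ ∪ Ω₂) = μ Ω₁ + μ Ω₂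

namespace IsAddContentBP

lemma mono (hμ : IsAddContentBP P μ) {A B : Set G} (hA : MemBP P A) (hB : MemBP P B)
    (hAB : A ⊆ B) : μ A ≤ μ B := by
  have hBA := memBP_diff hB hA
  have h := hμ.union_eq A (B \ A) hA hBA Set.disjoint_sdiff_right
  rw [Set.union_sdiff_cancel hAB] at h
  linarith [hμ.nonneg _ hBA]

lemma apply_biUnion {ι : Type*} (hμ : IsAddContentBP P μ) (s : Finset ι) {A : ι → Set G}
    (hA : ∀ i ∈ s, MemBP P (A i)) (hdisj : (s : Set ι).PairwiseDisjoint A) :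
    μ (⋃ i ∈ s, A i) = ∑ i ∈ s, μ (A i) := by
  classical
  induction s using Finset.induction_on with
  | empty => simpa using (hμ.union_eq ∅ ∅ memBP_empty memBP_empty (by simp)).symm
  | insert a s ha ih =>
    rw [Finset.coe_insert, Set.pairwiseDisjoint_insert] at hdisj
    have hAs : ∀ i ∈ s, MemBP P (A i) := fun i hi => hA i (Finset.mem_insert_of_mem hi)
    have hdisj_a : Disjoint (A a) (⋃ i ∈ s, A i) :=
      Set.disjoint_iUnion₂_right.mpr fun i hi => hdisj.2 i hi (ne_of_mem_of_not_mem hi ha).symm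
    rw [Finset.set_biUnion_insert, Finset.sum_insert ha,
      hμ.union_eq _ _ (hA a (s.mem_insert_self a)) (memBP_biUnion s hAs) hdisj_a, ih hAs hdisj.1]

lemma sum_le {ι : Type*} (hμ : IsAddContentBP P μ) (s : Finset ι) {A : ι → Set G}
    {Ω : Set G} (hA : ∀ i ∈ s, MemBP P (A i)) (hdisj : (s : Set ι).PairwiseDisjoint A)
    (hΩ : MemBP P Ω) (hAΩ : ∀ i ∈ s, A i ⊆ Ω) : ∑ i ∈ s, μ (A i) ≤ μ Ω :=
  hμ.apply_biUnion s hA hdisj ▸ hμ.mono (memBP_biUnion s hA) hΩ (Set.iUnion₂_subset hAΩ)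

lemma wt_nonneg (hμ : IsAddContentBP P μ) (p : G) : 0 ≤ wt P μ p :=
  Real.sInf_nonneg (by rintro r ⟨Ω, hΩ, -, rfl⟩; exact hμ.nonneg Ω hΩ)

lemma wt_le (hμ : IsAddContentBP P μ) {p : G} {Ω : Set G} (hΩ : MemBP P Ω) (hp : p ∈ Ω) :
    wt P μ p ≤ μ Ω :=
  csInf_le ⟨0, by rintro r ⟨Ω', hΩ', -, rfl⟩; exact hμ.nonneg Ω' hΩ'⟩ ⟨Ω, hΩ, hp, rfl⟩

lemma sum_wt_le (hμ : IsAddContentBP P μ) (hcap : ∀ g ∈ P, g⁻¹ ∈ P → g = 1) {Ω : Set G}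
    (hΩ : MemBP P Ω) (F : Finset G) (hFΩ : ∀ p ∈ F, p ∈ Ω) : ∑ p ∈ F, wt P μ p ≤ μ Ω := by
  have hFP : ∀ p ∈ F, p ∈ P := fun p hp => memBP_subset hΩ (hFΩ p hp)
  have hS : ∀ p ∈ F, MemBP P (separatingSet P F p ∩ Ω) := fun p hp =>
    MemBP.inter _ _ (memBP_separatingSet F (hFP p hp) hFP) hΩ
  calc ∑ p ∈ F, wt P μ p ≤ ∑ p ∈ F, μ (separatingSet P F p ∩ Ω) :=
        Finset.sum_le_sum fun p hp => hμ.wt_le (hS p hp) ⟨mem_separatingSet_self F p, hFΩ p hp⟩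
    _ ≤ μ Ω :=
        hμ.sum_le F hS
          ((pairwiseDisjoint_separatingSet hcap F).mono fun _ => Set.inter_subset_left) hΩ
          fun _ _ => Set.inter_subset_right

end IsAddContentBP

end Content

theorem stmt7_general {G : Type*} [Group G] (P : Submonoid G) (hQL : QuasiLatticeOrdered P)
    (μ : Set G → ℝ)
    (hpos : ∀ Ω : Set G, MemBP P Ω → 0 ≤ μ Ω)
    (hadd : ∀ Ω₁ Ω₂ : Set G, MemBP P Ω₁ → MemBP P Ω₂ → Disjoint Ω₁ Ω₂ →
      μ (Ω₁ ∪ Ω₂) = μ Ω₁ + μ Ω₂) :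
    ∀ Ω : Set G, MemBP P Ω →
      (Summable fun p : Ω => wt P μ (p : G)) ∧ ∑' p : Ω, wt P μ (p : G) ≤ μ Ω := by
  intro Ω hΩ
  have hμ : IsAddContentBP P μ := ⟨hpos, hadd⟩
  have hfinite : ∀ u : Finset Ω, ∑ p ∈ u, wt P μ (p : G) ≤ μ Ω := fun u => by
    simpa using hμ.sum_wt_le hQL.cap hΩ (u.map (Function.Embedding.subtype _))
      (by simp +contextual)
  have hsummable := summable_of_sum_le (f := fun p : Ω => wt P μ p)
    (fun p => hμ.wt_nonneg (p : G)) hfinite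
  exact ⟨hsummable, hsummable.tsum_le_of_sum_le hfinite⟩

/-- If `μ` is a finitely additive probability measure on `(P, B_P)` with `(μ(pP))_{p ∈ P}`
summable, then for every `Ω ∈ B_P`, `(w_p)_{p ∈ Ω}` is summable and `∑_{p ∈ Ω} w_p ≤ μ(Ω)`. -/
theorem stmt7 {G : Type*} [Group G] (P : Submonoid G) (hQL : QuasiLatticeOrdered P)
    (μ : Set G → ℝ)
    (hpos : ∀ Ω : Set G, MemBP P Ω → 0 ≤ μ Ω)
    (hone : μ (P : Set G) = 1)
    (hadd : ∀ Ω₁ Ω₂ : Set G, MemBP P Ω₁ → MemBP P Ω₂ → Disjoint Ω₁ Ω₂ →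
      μ (Ω₁ ∪ Ω₂) = μ Ω₁ + μ Ω₂)
    (hsum : Summable fun p : P => μ {x | QLe P (p : G) x}) :
    ∀ Ω : Set G, MemBP P Ω →
      (Summable fun p : Ω => wt P μ (p : G)) ∧ ∑' p : Ω, wt P μ (p : G) ≤ μ Ω :=
  stmt7_general P hQL μ hpos hadd
end

section
/- Let J be a finite partially ordered set in which any two elements with a common upper bound have a least upper bound, and let f : J → ℂ. Define a new function f̂ on J by f̂(p) = f(p) + ∑_{∅≠K⊆{q∈J : q>p}} (−1)^{|K|}·t_K, where t_K = f(q_K) if the subset K has a least upper bound q_K in J and t_K = 0 otherwise. Then for every p ∈ J one has f(p) = ∑_{q∈J, q≥p} f̂(q). -/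
open Classical in
/-- `t_K = f(q_K)` if the finite set `K` has a least upper bound `q_K`, and `0` otherwise. -/
noncomputable def tK {J : Type*} [PartialOrder J] (f : J → ℂ) (K : Finset J) : ℂ :=
  if h : ∃ u : J, IsLUB (K : Set J) u then f h.choose else 0

open Classical in
/-- `f̂(p) = f(p) + ∑_{∅ ≠ K ⊆ {q : q > p}} (−1)^{|K|} t_K`. -/
noncomputable def fhat {J : Type*} [Fintype J] [PartialOrder J] (f : J → ℂ) (p : J) : ℂ :=
  f p + ∑ K ∈ (Finset.univ.filter (fun q : J => p < q)).powerset.erase ∅,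
    (-1 : ℂ) ^ K.card * tK f K

/-!
Let `L p v` be the signed count `∑ (-1)^|K|` over the nonempty `K ⊆ (p, ∞)` with least upper
bound `v`, and let `Z p q = [p ≤ q]` be the zeta matrix. Then `f̂ = (1 + L) f`, so it suffices
that `Z (1 + L) = 1`, which for square matrices follows from `(1 + L) Z = 1`.

Now `∑_{v ≤ u} L p v` is the signed count of the nonempty `K ⊆ (p, ∞)` that have a least upper
bound below `u`. In a quasi-lattice every nonempty finite set that is bounded above has a least
upper bound, so these `K` are exactly the nonempty subsets of `(p, u]`, and the alternating sum
over them is `-[p < u]`. Hence `((1 + L) Z) p u = [p ≤ u] - [p < u] = [p = u]`.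
-/

open Finset

theorem Finset.sum_powerset_erase_empty_neg_one_pow {α R : Type*} [DecidableEq α] [Ring R]
    (s : Finset α) :
    ∑ K ∈ s.powerset.erase ∅, (-1 : R) ^ #K = if s.Nonempty then -1 else 0 := by
  have h := congrArg (Int.cast : ℤ → R) (sum_powerset_neg_one_pow_card (x := s))
  push_cast at h
  rw [← sum_erase_add _ _ (empty_mem_powerset s), card_empty, pow_zero] at h
  rw [eq_sub_of_add_eq h]
  split_ifs <;> simp_all [nonempty_iff_ne_empty]

theorem Finset.Nonempty.exists_isLUB {J : Type*} [PartialOrder J]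
    (hql : ∀ p q : J, (∃ u : J, p ≤ u ∧ q ≤ u) → ∃ u : J, IsLUB {p, q} u)
    {K : Finset J} (hK : K.Nonempty) (hbdd : BddAbove (K : Set J)) :
    ∃ v, IsLUB (K : Set J) v := by
  induction hK using Finset.Nonempty.cons_induction with
  | singleton a => exact ⟨a, by simp⟩
  | cons a s _ _ ih =>
    obtain ⟨u, hu⟩ := hbdd
    rw [coe_cons, upperBounds_insert] at hu
    obtain ⟨v, hv⟩ := ih ⟨u, hu.2⟩
    obtain ⟨w, hw⟩ := hql a v ⟨u, hu.1, (isLUB_le_iff hv).2 hu.2⟩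
    refine ⟨w, ?_⟩
    simpa only [IsLUB, coe_cons, upperBounds_insert, hv.upperBounds_eq, upperBounds_singleton]
      using hw

open Classical in
noncomputable def zetaMatrix (J R : Type*) [PartialOrder J] [Zero R] [One R] : Matrix J J R :=
  Matrix.of fun p q => if p ≤ q then 1 else 0

section QuasiLattice

open Classical Matrix

variable {J : Type*} [Fintype J] [PartialOrder J]

theorem sum_ite_isLUB_and_le {R : Type*} [AddCommMonoid R]
    (hql : ∀ p q : J, (∃ u : J, p ≤ u ∧ q ≤ u) → ∃ u : J, IsLUB {p, q} u)
    {K : Finset J} (hK : K.Nonempty) (u : J) (c : R) :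
    ∑ v, (if IsLUB (K : Set J) v ∧ v ≤ u then c else 0) = if ∀ x ∈ K, x ≤ u then c else 0 := by
  by_cases hlub : ∃ v₀, IsLUB (K : Set J) v₀
  · obtain ⟨v₀, hv₀⟩ := hlub
    have hiff : ∀ v, IsLUB (K : Set J) v ↔ v₀ = v := fun _ => IsLeast.isLeast_iff_eq hv₀
    simp only [hiff, ite_and, sum_ite_eq, mem_univ, if_true, isLUB_le_iff hv₀, mem_upperBounds,
      mem_coe]
  · have hunb : ¬ ∀ x ∈ K, x ≤ u := fun hu => hlub (hK.exists_isLUB hql ⟨u, by simpa⟩)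
    rw [if_neg hunb]
    exact sum_eq_zero fun v _ => if_neg fun h => hlub ⟨v, h.1⟩

noncomputable def lubCoeff (R : Type*) [Ring R] (p v : J) : R :=
  ∑ K ∈ (univ.filter (fun q : J => p < q)).powerset.erase ∅,
    if IsLUB (K : Set J) v then (-1 : R) ^ #K else 0

theorem zetaMatrix_mulVec_apply {R : Type*} [NonAssocSemiring R] (g : J → R) (p : J) :
    (zetaMatrix J R *ᵥ g) p = ∑ q ∈ univ.filter (fun q : J => p ≤ q), g q := by
  simp [zetaMatrix, mulVec, dotProduct, sum_filter]

theorem sum_lubCoeff_mul_zetaMatrix {R : Type*} [Ring R]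
    (hql : ∀ p q : J, (∃ u : J, p ≤ u ∧ q ≤ u) → ∃ u : J, IsLUB {p, q} u) (p u : J) :
    ∑ v, lubCoeff R p v * zetaMatrix J R v u = if p < u then -1 else 0 := by
  have hfilter : ((univ.filter (fun q : J => p < q)).powerset.erase ∅).filter
      (fun K => ∀ x ∈ K, x ≤ u) = (univ.filter (fun q : J => p < q ∧ q ≤ u)).powerset.erase ∅ := by
    ext K
    simp only [mem_filter, mem_erase, mem_powerset, subset_iff, mem_univ, true_and]
    grind
  have hIoc : (univ.filter (fun q : J => p < q ∧ q ≤ u)).Nonempty ↔ p < u :=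
    ⟨fun ⟨v, hv⟩ => by simp only [mem_filter, mem_univ, true_and] at hv; exact hv.1.trans_le hv.2,
      fun h => ⟨u, by simp [h]⟩⟩
  calc ∑ v, lubCoeff R p v * zetaMatrix J R v u
      = ∑ K ∈ (univ.filter (fun q : J => p < q)).powerset.erase ∅,
          ∑ v, (if IsLUB (K : Set J) v ∧ v ≤ u then (-1 : R) ^ #K else 0) := by
        simp only [lubCoeff, zetaMatrix, of_apply, sum_mul]
        rw [Finset.sum_comm]
        simp only [ite_zero_mul_ite_zero, mul_one]
    _ = ∑ K ∈ (univ.filter (fun q : J => p < q)).powerset.erase ∅,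
          (if ∀ x ∈ K, x ≤ u then (-1 : R) ^ #K else 0) :=
        sum_congr rfl fun K hK => sum_ite_isLUB_and_le hql
          (nonempty_iff_ne_empty.2 (ne_of_mem_erase hK)) u _
    _ = if p < u then -1 else 0 := by
        rw [← sum_filter, hfilter, sum_powerset_erase_empty_neg_one_pow]
        exact if_congr hIoc rfl rfl

theorem one_add_lubCoeff_mul_zetaMatrix {R : Type*} [Ring R]
    (hql : ∀ p q : J, (∃ u : J, p ≤ u ∧ q ≤ u) → ∃ u : J, IsLUB {p, q} u) :
    (1 + of (lubCoeff R)) * zetaMatrix J R = 1 := by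
  ext p u
  rw [add_mul, one_mul, Matrix.add_apply, mul_apply]
  simp only [of_apply]
  rw [sum_lubCoeff_mul_zetaMatrix hql]
  simp only [zetaMatrix, of_apply, one_apply]
  rcases eq_or_ne p u with rfl | hne
  · simp
  by_cases h : p ≤ u
  · simp [h, hne, lt_of_le_of_ne h hne]
  · simp [h, hne, mt le_of_lt h]

theorem tK_eq_sum (f : J → ℂ) (K : Finset J) :
    tK f K = ∑ u, if IsLUB (K : Set J) u then f u else 0 := by
  unfold tK
  split_ifs with h
  · have hiff : ∀ v, IsLUB (K : Set J) v ↔ h.choose = v :=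
      fun _ => IsLeast.isLeast_iff_eq h.choose_spec
    simp only [hiff, sum_ite_eq, mem_univ, if_true]
  · exact (sum_eq_zero fun u _ => if_neg fun hu => h ⟨u, hu⟩).symm

theorem fhat_eq_mulVec (f : J → ℂ) : fhat f = (1 + of (lubCoeff ℂ)) *ᵥ f := by
  ext p
  rw [add_mulVec, one_mulVec, Pi.add_apply, fhat]
  congr 1
  simp only [mulVec, dotProduct, of_apply, lubCoeff, tK_eq_sum, mul_sum, sum_mul]
  rw [Finset.sum_comm]
  simp only [mul_ite, ite_mul, mul_zero, zero_mul]

end QuasiLattice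

open Classical in
/-- In a finite quasi-lattice `J` (any two elements with a common upper bound have a least
upper bound), for every `f : J → ℂ` and every `p ∈ J` one has
`f(p) = ∑_{q ≥ p} f̂(q)`. -/
theorem stmt10 {J : Type*} [Fintype J] [PartialOrder J]
    (hql : ∀ p q : J, (∃ u : J, p ≤ u ∧ q ≤ u) → ∃ u : J, IsLUB {p, q} u)
    (f : J → ℂ) (p : J) :
    f p = ∑ q ∈ Finset.univ.filter (fun q : J => p ≤ q), fhat f q := by
  rw [← zetaMatrix_mulVec_apply, fhat_eq_mulVec, Matrix.mulVec_mulVec,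
    mul_eq_one_comm.mp (one_add_lubCoeff_mul_zetaMatrix hql), Matrix.one_mulVec]
end

section
/- Let F be a (not necessarily unital) C*-algebra, I a quasi-lattice, and (B_q)_{q∈I} a family of closed *-subalgebras of F such that B_q·B_r ⊆ B_{q∨r} whenever q,r ∈ I have a common upper bound, and B_q·B_r = {0} otherwise. Let 𝔅 denote the linear span of ⋃_{q∈I} B_q. Fix p ∈ I and let ψ : 𝔅 → ℂ be a linear functional such that ψ vanishes on B_q for every q ∈ I with q ≰ p, and such that ψ(x*x) ≥ 0 for every x in the linear span of ⋃_{q≤p} B_q. Then ψ(x*x) ≥ 0 for every x ∈ 𝔅. -/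
/-!
Split `x = y + z` with `y` in the span of the `B q`, `q ≤ p`, and `z` in the span `N` of the
`B q`, `q ≰ p`. A product of elements of `B q` and `B r` vanishes or lies in `B u` for an upper
bound `u` of `q` and `r`, and `u ≰ p` as soon as `r ≰ p`; so `N` absorbs multiplication by the
whole span on both sides. Since `ψ` kills `N`, `ψ (star x * x) = ψ (star y * y) ≥ 0`.
-/

open scoped ComplexOrder

open Submodule

theorem Submodule.star_mem_span {R A : Type*} [CommSemiring R] [StarRing R] [AddCommMonoid A]
    [StarAddMonoid A] [Module R A] [StarModule R A] {s : Set A} (hs : ∀ x ∈ s, star x ∈ s)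
    {x : A} (hx : x ∈ span R s) : star x ∈ span R s := by
  induction hx using span_induction with
  | mem x hx => exact subset_span (hs x hx)
  | zero => simp
  | add x y _ _ hx hy => simpa only [star_add] using add_mem hx hy
  | smul c x _ hx => simpa only [star_smul] using smul_mem _ (star c) hx

theorem star_mem_span_biUnion {R A I : Type*} [CommSemiring R] [StarRing R]
    [NonUnitalNonAssocSemiring A] [StarAddMonoid A] [Module R A] [StarModule R A]
    {B : I → NonUnitalStarSubalgebra R A} (S : Set I) {x : A}
    (hx : x ∈ span R (⋃ q ∈ S, (B q : Set A))) : star x ∈ span R (⋃ q ∈ S, (B q : Set A)) := by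
  refine star_mem_span (fun x hx => ?_) hx
  obtain ⟨q, hq, hx⟩ := Set.mem_iUnion₂.mp hx
  exact Set.mem_biUnion hq (star_mem hx)

theorem Submodule.mul_mem_of_mem_span {R A : Type*} [CommSemiring R] [NonUnitalNonAssocSemiring A]
    [Module R A] [IsScalarTower R A A] [SMulCommClass R A A] {s t : Set A} {P : Submodule R A}
    (h : ∀ x ∈ s, ∀ y ∈ t, x * y ∈ P) {x y : A} (hx : x ∈ span R s) (hy : y ∈ span R t) :
    x * y ∈ P := by
  have hle : map₂ (LinearMap.mul R A) (span R s) (span R t) ≤ P := by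
    rw [map₂_span_span, span_le]
    rintro _ ⟨x, hx, y, hy, rfl⟩
    exact h x hx y hy
  exact map₂_le.mp hle x hx y hy

theorem Submodule.span_iUnion_eq_sup {R M ι : Type*} [Semiring R] [AddCommMonoid M] [Module R M]
    (s : ι → Set M) (P : ι → Prop) :
    span R (⋃ i, s i) = span R (⋃ i ∈ {i | P i}, s i) ⊔ span R (⋃ i ∈ {i | ¬ P i}, s i) := by
  rw [← span_union, ← Set.biUnion_union]
  simp [em]

section QuasiLatticeGraded

variable {R A I : Type*} [CommSemiring R] [NonUnitalNonAssocSemiring A] [Module R A] [Star A]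
  [PartialOrder I]

def MulMemUpperBound (B : I → NonUnitalStarSubalgebra R A) : Prop :=
  ∀ q r : I, ∀ x ∈ B q, ∀ y ∈ B r, x * y = 0 ∨ ∃ u, q ≤ u ∧ r ≤ u ∧ x * y ∈ B u

theorem mulMemUpperBound_of_isLUB {B : I → NonUnitalStarSubalgebra R A}
    (hql : ∀ q r : I, (∃ u : I, q ≤ u ∧ r ≤ u) → ∃ u : I, IsLUB {q, r} u)
    (hmul : ∀ q r u : I, IsLUB {q, r} u → ∀ x ∈ B q, ∀ y ∈ B r, x * y ∈ B u)
    (hmul0 : ∀ q r : I, ¬ (∃ u : I, q ≤ u ∧ r ≤ u) → ∀ x ∈ B q, ∀ y ∈ B r, x * y = 0) :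
    MulMemUpperBound B := by
  intro q r x hx y hy
  by_cases hub : ∃ u : I, q ≤ u ∧ r ≤ u
  · obtain ⟨u, hu⟩ := hql q r hub
    exact .inr ⟨u, hu.1 (by simp), hu.1 (by simp), hmul q r u hu x hx y hy⟩
  · exact .inl (hmul0 q r hub x hx y hy)

namespace MulMemUpperBound

variable {B : I → NonUnitalStarSubalgebra R A} (p : I)

theorem mul_mem_span_not_le (hB : MulMemUpperBound B) {q r : I} (hr : ¬ r ≤ p) {x y : A}
    (hx : x ∈ B q) (hy : y ∈ B r) :
    x * y ∈ span R (⋃ q ∈ {q : I | ¬ q ≤ p}, (B q : Set A)) ∧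
      y * x ∈ span R (⋃ q ∈ {q : I | ¬ q ≤ p}, (B q : Set A)) := by
  have mem_of_upper : ∀ z : A, (z = 0 ∨ ∃ u, r ≤ u ∧ z ∈ B u) →
      z ∈ span R (⋃ q ∈ {q : I | ¬ q ≤ p}, (B q : Set A)) := by
    rintro z (rfl | ⟨u, hru, hz⟩)
    · exact zero_mem _
    · exact subset_span (Set.mem_biUnion (fun hup => hr (hru.trans hup)) hz)
  refine ⟨mem_of_upper _ ?_, mem_of_upper _ ?_⟩
  · obtain h | ⟨u, -, hru, h⟩ := hB q r x hx y hy
    exacts [.inl h, .inr ⟨u, hru, h⟩]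
  · obtain h | ⟨u, hru, -, h⟩ := hB r q y hy x hx
    exacts [.inl h, .inr ⟨u, hru, h⟩]

theorem mul_mem_span_not_le_of_mem_span [IsScalarTower R A A] [SMulCommClass R A A]
    (hB : MulMemUpperBound B) {a b : A} (ha : a ∈ span R (⋃ q, (B q : Set A)))
    (hb : b ∈ span R (⋃ q ∈ {q : I | ¬ q ≤ p}, (B q : Set A))) :
    a * b ∈ span R (⋃ q ∈ {q : I | ¬ q ≤ p}, (B q : Set A)) ∧
      b * a ∈ span R (⋃ q ∈ {q : I | ¬ q ≤ p}, (B q : Set A)) := by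
  constructor
  · refine mul_mem_of_mem_span (fun x hx y hy => ?_) ha hb
    obtain ⟨q, hx⟩ := Set.mem_iUnion.mp hx
    obtain ⟨r, hr, hy⟩ := Set.mem_iUnion₂.mp hy
    exact (hB.mul_mem_span_not_le p hr hx hy).1
  · refine mul_mem_of_mem_span (fun y hy x hx => ?_) hb ha
    obtain ⟨q, hx⟩ := Set.mem_iUnion.mp hx
    obtain ⟨r, hr, hy⟩ := Set.mem_iUnion₂.mp hy
    exact (hB.mul_mem_span_not_le p hr hx hy).2

end MulMemUpperBound

end QuasiLatticeGraded

section Positivity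

variable {R A M I : Type*} [CommSemiring R] [StarRing R] [NonUnitalNonAssocSemiring A]
  [StarAddMonoid A] [Module R A] [StarModule R A] [IsScalarTower R A A] [SMulCommClass R A A]
  [AddCommMonoid M] [Module R M] [PartialOrder I] {B : I → NonUnitalStarSubalgebra R A}

theorem MulMemUpperBound.exists_map_star_mul_self_eq (hB : MulMemUpperBound B) (p : I)
    (ψ : A →ₗ[R] M) (hvanish : ∀ q : I, ¬ q ≤ p → ∀ x ∈ B q, ψ x = 0) {x : A}
    (hx : x ∈ span R (⋃ q, (B q : Set A))) :
    ∃ y ∈ span R (⋃ q ∈ {q : I | q ≤ p}, (B q : Set A)), ψ (star x * x) = ψ (star y * y) := by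
  set N := span R (⋃ q ∈ {q : I | ¬ q ≤ p}, (B q : Set A))
  have hN : N ≤ LinearMap.ker ψ :=
    span_le.mpr <| Set.iUnion₂_subset fun q hq x hx => hvanish q hq x hx
  have hle : ∀ S : Set I, span R (⋃ q ∈ S, (B q : Set A)) ≤ span R (⋃ q, (B q : Set A)) :=
    fun S => span_mono (Set.iUnion₂_subset_iUnion _ _)
  obtain ⟨y, hy, z, hz, rfl⟩ := mem_sup.mp (by rwa [span_iUnion_eq_sup _ (· ≤ p)] at hx)
  have hyz : star y * z ∈ N :=
    (hB.mul_mem_span_not_le_of_mem_span p (hle _ (star_mem_span_biUnion _ hy)) hz).1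
  have hzx : star z * (y + z) ∈ N :=
    (hB.mul_mem_span_not_le_of_mem_span p hx (star_mem_span_biUnion _ hz)).2
  refine ⟨y, hy, ?_⟩
  rw [star_add, add_mul, mul_add, add_assoc, map_add, map_add, hN hyz, hN hzx, add_zero, add_zero]

end Positivity

theorem stmt12_general {F : Type*} [NonUnitalCStarAlgebra F] {I : Type*} [PartialOrder I]
    (hql : ∀ q r : I, (∃ u : I, q ≤ u ∧ r ≤ u) → ∃ u : I, IsLUB {q, r} u)
    (B : I → NonUnitalStarSubalgebra ℂ F)
    (hmul : ∀ q r u : I, IsLUB {q, r} u → ∀ x ∈ B q, ∀ y ∈ B r, x * y ∈ B u)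
    (hmul0 : ∀ q r : I, ¬ (∃ u : I, q ≤ u ∧ r ≤ u) →
      ∀ x ∈ B q, ∀ y ∈ B r, x * y = 0)
    (p : I) (ψ : F →ₗ[ℂ] ℂ)
    (hvanish : ∀ q : I, ¬ q ≤ p → ∀ x ∈ B q, ψ x = 0)
    (hpos : ∀ x ∈ Submodule.span ℂ (⋃ q ∈ {q : I | q ≤ p}, (B q : Set F)),
      0 ≤ ψ (star x * x)) :
    ∀ x ∈ Submodule.span ℂ (⋃ q : I, (B q : Set F)), 0 ≤ ψ (star x * x) := by
  intro x hx
  obtain ⟨y, hy, hxy⟩ :=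
    (mulMemUpperBound_of_isLUB hql hmul hmul0).exists_map_star_mul_self_eq p ψ hvanish hx
  exact hxy ▸ hpos y hy

/-- Let `F` be a (not necessarily unital) C*-algebra, `I` a quasi-lattice, and `(B q)_{q ∈ I}`
closed *-subalgebras of `F` with `B_q · B_r ⊆ B_{q ∨ r}` when `q, r` have a common upper
bound and `B_q · B_r = {0}` otherwise.  Let `𝔅` be the linear span of `⋃_q B_q`.  If a
linear functional `ψ` vanishes on `B_q` for every `q ≰ p` and satisfies `ψ(x* x) ≥ 0` for
every `x` in the linear span of `⋃_{q ≤ p} B_q`, then `ψ(x* x) ≥ 0` for every `x ∈ 𝔅`. -/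
theorem stmt12 {F : Type*} [NonUnitalCStarAlgebra F] {I : Type*} [PartialOrder I]
    (hql : ∀ q r : I, (∃ u : I, q ≤ u ∧ r ≤ u) → ∃ u : I, IsLUB {q, r} u)
    (B : I → NonUnitalStarSubalgebra ℂ F)
    (hclosed : ∀ q, IsClosed (B q : Set F))
    (hmul : ∀ q r u : I, IsLUB {q, r} u → ∀ x ∈ B q, ∀ y ∈ B r, x * y ∈ B u)
    (hmul0 : ∀ q r : I, ¬ (∃ u : I, q ≤ u ∧ r ≤ u) →
      ∀ x ∈ B q, ∀ y ∈ B r, x * y = 0)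
    (p : I) (ψ : F →ₗ[ℂ] ℂ)
    (hvanish : ∀ q : I, ¬ q ≤ p → ∀ x ∈ B q, ψ x = 0)
    (hpos : ∀ x ∈ Submodule.span ℂ (⋃ q ∈ {q : I | q ≤ p}, (B q : Set F)),
      0 ≤ ψ (star x * x)) :
    ∀ x ∈ Submodule.span ℂ (⋃ q : I, (B q : Set F)), 0 ≤ ψ (star x * x) :=
  stmt12_general hql B hmul hmul0 p ψ hvanish hpos
end

section
/- Let α be a real number with α > 2, let m ≥ 1 be an integer, let λ ∈ [0,1], and let A be the 2×2 real matrix with rows (1, −2/α) and (−2/α, 1). Then both entries of the vector A^m·(λ, 1−λ)ᵀ are nonnegative if and only if |λ − 1/2| ≤ (1/2)·((α−2)/(α+2))^m. -/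
/-!
The matrix `!![a, b; b, a]` has eigenvectors `(1, 1)` and `(1, -1)` with eigenvalues
`a + b` and `a - b`. Splitting `(λ, 1 - λ) = ½ (1, 1) + (λ - ½) (1, -1)`, the entries of
`A^m (λ, 1 - λ)` are `½ q^m ± (λ - ½) r^m` with `q = (α - 2)/α` and `r = (α + 2)/α`;
both are nonnegative exactly when `|λ - ½| r^m ≤ ½ q^m`.
-/

open Matrix

theorem Matrix.pow_mulVec_add_sub {R : Type*} [CommRing R] (a b s d : R) (m : ℕ) :
    (!![a, b; b, a] ^ m) *ᵥ ![s + d, s - d] =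
      ![(a + b) ^ m * s + (a - b) ^ m * d, (a + b) ^ m * s - (a - b) ^ m * d] := by
  induction m generalizing s d with
  | zero => simp
  | succ m ih =>
    have step : !![a, b; b, a] *ᵥ ![s + d, s - d] =
        ![(a + b) * s + (a - b) * d, (a + b) * s - (a - b) * d] := by
      ext i; fin_cases i <;> simp [mulVec, dotProduct] <;> ring
    rw [pow_succ, ← mulVec_mulVec, step, ih]
    ext i; fin_cases i <;> simp <;> ring

theorem stmt15_general (α : ℝ) (hα : 2 < α) (m : ℕ) (lam : ℝ) :
    (0 ≤ ((!![1, -2/α; -2/α, 1] ^ m).mulVec ![lam, 1 - lam]) 0 ∧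
      0 ≤ ((!![1, -2/α; -2/α, 1] ^ m).mulVec ![lam, 1 - lam]) 1) ↔
    |lam - 1/2| ≤ (1/2) * ((α - 2)/(α + 2)) ^ m := by
  have hα₀ : α ≠ 0 := by positivity
  have hsum : (1 : ℝ) + -2 / α = (α - 2) / α := by field_simp; ring
  have hdiff : (1 : ℝ) - -2 / α = (α + 2) / α := by field_simp; ring
  have hr : 0 < ((α + 2) / α) ^ m := by positivity
  have hratio :
      (1 / 2) * ((α - 2) / (α + 2)) ^ m = ((α - 2) / α) ^ m / 2 / ((α + 2) / α) ^ m := by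
    rw [← div_div_div_cancel_right₀ hα₀ (α - 2), div_pow]; ring
  have hv : ![lam, 1 - lam] = ![1 / 2 + (lam - 1 / 2), 1 / 2 - (lam - 1 / 2)] := by
    ext i; fin_cases i <;> simp; ring
  have habs : |lam - 1 / 2| * ((α + 2) / α) ^ m = |((α + 2) / α) ^ m * (lam - 1 / 2)| := by
    rw [abs_mul, abs_of_pos hr, mul_comm]
  rw [hv, pow_mulVec_add_sub, hsum, hdiff, hratio, le_div_iff₀ hr, habs, abs_le]
  simp only [cons_val_zero, cons_val_one]
  constructor <;> rintro ⟨h₀, h₁⟩ <;> constructor <;> linarith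

/-- For `α > 2`, `m ≥ 1` and `λ ∈ [0,1]`, both entries of
`[[1, −2/α], [−2/α, 1]]^m · (λ, 1−λ)ᵀ` are nonnegative if and only if
`|λ − 1/2| ≤ (1/2) ((α−2)/(α+2))^m`. -/
theorem stmt15 (α : ℝ) (hα : 2 < α) (m : ℕ) (hm : 1 ≤ m) (lam : ℝ)
    (hlam : lam ∈ Set.Icc (0 : ℝ) 1) :
    (0 ≤ ((!![1, -2/α; -2/α, 1] ^ m).mulVec ![lam, 1 - lam]) 0 ∧
      0 ≤ ((!![1, -2/α; -2/α, 1] ^ m).mulVec ![lam, 1 - lam]) 1) ↔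
    |lam - 1/2| ≤ (1/2) * ((α - 2)/(α + 2)) ^ m :=
  stmt15_general α hα m lam
end
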